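/- arXiv:2504.18021 — 2 statements merged into one kernel-verified Lean document; each statement's English description precedes it below -/
import Mathlib

section
/- Let F: B → A be a full exact embedding between abelian categories in which every object has finite length. If B contains two non-isomorphic indecomposable objects with the same composition factors (with multiplicities), then A also contains two non-isomorphic indecomposable objects with the same composition factors (with multiplicities). -/
/-!
Take `X' = F X` and `Y' = F Y`. In an abelian (hence idempotent complete) category an object is
indecomposable iff it is nonzero and its only idempotent endomorphisms are `0` and `1`; a fully
faithful functor identifies `End X` with `End (F X)`, so it preserves indecomposability, and it
reflects isomorphisms. Exactness turns a composition series of `X` into a filtration of `F X` by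
monomorphisms whose subquotients `F Sᵢ` need not be simple in `A`. Refining every `F Sᵢ` by a
composition series in `A`, and using isomorphic refinements for the matching factors of `X` and
`Y`, yields composition series of `F X` and `F Y` whose factor lists are permutations of each
other. Refining a filtration amounts to splicing: if `0 → U → V → C → 0` is exact, the preimages
in `V` of a composition series of `C` continue one of `U`.
-/

open CategoryTheory CategoryTheory.Limits

universe v₁ v₂ u₁ u₂

/-- A composition chain for an object `X` of an abelian category: a chain of monomorphisms
starting at a zero object and ending at `X`, all of whose cokernels (the composition
factors) are simple. -/
structure CompChain {A : Type u₁} [Category.{v₁} A] [Abelian A] (X : A) where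
  n : ℕ
  obj : Fin (n + 1) → A
  map : ∀ i : Fin n, obj i.castSucc ⟶ obj i.succ
  mono : ∀ i, Mono (map i)
  simpleFactor : ∀ i, Simple (cokernel (map i))
  bot : IsZero (obj 0)
  top : obj (Fin.last n) ≅ X

/-- Every object of the abelian category has finite length. -/
def AllFiniteLength (A : Type u₁) [Category.{v₁} A] [Abelian A] : Prop :=
  ∀ X : A, Nonempty (CompChain X)

/-- Two objects have the same composition factors with the same multiplicities. -/
def SameFactors {A : Type u₁} [Category.{v₁} A] [Abelian A] (X Y : A) : Prop :=
  ∃ (cX : CompChain X) (cY : CompChain Y) (e : Fin cX.n ≃ Fin cY.n),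
    ∀ i, Nonempty (cokernel (cX.map i) ≅ cokernel (cY.map (e i)))

/-- An object of an abelian category is indecomposable. -/
def IndecomposableObj {A : Type u₁} [Category.{v₁} A] [Abelian A] (X : A) : Prop :=
  ¬ IsZero X ∧ ∀ Y Z : A, Nonempty (X ≅ Y ⊞ Z) → IsZero Y ∨ IsZero Z

theorem List.Perm.exists_equiv_getElem_eq {α : Type*} {l₁ l₂ : List α} (h : l₁.Perm l₂) :
    ∃ e : Fin l₁.length ≃ Fin l₂.length, ∀ i, l₂[e i] = l₁[i] := by
  classical
  exact ⟨⟨h.idxBij, h.symm.idxBij, h.idxBij_symm_leftInverse_idxBij,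
    h.idxBij_leftInverse_idxBij_symm⟩, h.getElem_idxBij_eq_getElem⟩

theorem List.ofFn_comp_equiv_perm {α : Type*} {m n : ℕ} (f : Fin n → α) (σ : Fin m ≃ Fin n) :
    (List.ofFn (f ∘ σ)).Perm (List.ofFn f) := by
  obtain rfl : m = n := by simpa using Fintype.card_congr σ
  exact Equiv.Perm.ofFn_comp_perm σ f

section Biproducts

variable {C : Type*} [Category C]

theorem isZero_left_iff_biprod_fst_inl_eq_zero [HasZeroMorphisms C] [HasBinaryBiproducts C]
    {Y Z : C} : IsZero Y ↔ (biprod.fst ≫ biprod.inl : Y ⊞ Z ⟶ Y ⊞ Z) = 0 := by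
  refine ⟨fun hY => by rw [hY.eq_of_src biprod.inl 0, comp_zero], fun h => ?_⟩
  have hid : biprod.inl ≫ (biprod.fst ≫ biprod.inl : Y ⊞ Z ⟶ Y ⊞ Z) ≫ biprod.fst = 𝟙 Y := by
    simp
  rw [h] at hid
  simpa [IsZero.iff_id_eq_zero] using hid.symm

theorem isZero_right_iff_biprod_fst_inl_eq_id [Preadditive C] [HasBinaryBiproducts C]
    {Y Z : C} : IsZero Z ↔ (biprod.fst ≫ biprod.inl : Y ⊞ Z ⟶ Y ⊞ Z) = 𝟙 _ := by
  refine ⟨fun hZ => ?_, fun h => ?_⟩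
  · rw [← biprod.total, hZ.eq_of_src biprod.inr 0, comp_zero, add_zero]
  · have hid : biprod.inr ≫ (biprod.fst ≫ biprod.inl : Y ⊞ Z ⟶ Y ⊞ Z) ≫ biprod.snd = 0 := by
      simp
    rw [h] at hid
    simpa [IsZero.iff_id_eq_zero] using hid

theorem exists_iso_biprod_of_idempotent [Preadditive C] [HasBinaryBiproducts C]
    [IsIdempotentComplete C] {X : C} {p : X ⟶ X} (hp : p ≫ p = p) :
    ∃ (Y Z : C) (e : X ≅ Y ⊞ Z), p = e.hom ≫ biprod.fst ≫ biprod.inl ≫ e.inv := by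
  obtain ⟨Y, i, r, hir, hri⟩ := IsIdempotentComplete.idempotents_split X p hp
  obtain ⟨Z, i', r', hir', hri'⟩ :=
    IsIdempotentComplete.idempotents_split X (𝟙 X - p) (Idempotents.idem_of_id_sub_idem p hp)
  have hip : i ≫ p = i := by rw [← hri, ← Category.assoc, hir, Category.id_comp]
  have hi'p : i' ≫ p = 0 := by
    have h : i' ≫ (𝟙 X - p) = i' := by rw [← hri', ← Category.assoc, hir', Category.id_comp]
    rwa [Preadditive.comp_sub, Category.comp_id, sub_eq_self] at h
  have hi : i ≫ r' = 0 := by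
    calc i ≫ r' = i ≫ (r' ≫ i') ≫ r' := by simp [hir']
      _ = 0 := by simp [hri', Preadditive.comp_sub, Preadditive.sub_comp, reassoc_of% hip]
  have hi' : i' ≫ r = 0 := by
    calc i' ≫ r = i' ≫ (r ≫ i) ≫ r := by simp [hir]
      _ = 0 := by simp [hri, reassoc_of% hi'p]
  refine ⟨Y, Z, ⟨biprod.lift r r', biprod.desc i i', ?_, ?_⟩, ?_⟩
  · simp [hri, hri']
  · ext <;> simp [hir, hir', hi, hi']
  · simp [hri]

end Biproducts

theorem indecomposableObj_iff_idempotents {A : Type u₁} [Category.{v₁} A] [Abelian A] {X : A} :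
    IndecomposableObj X ↔ ¬IsZero X ∧ ∀ p : X ⟶ X, p ≫ p = p → p = 0 ∨ p = 𝟙 X := by
  refine ⟨fun ⟨hX0, hX⟩ => ⟨hX0, fun p hp => ?_⟩, fun ⟨hX0, hX⟩ => ⟨hX0, fun Y Z ⟨e⟩ => ?_⟩⟩
  · obtain ⟨Y, Z, e, rfl⟩ := exists_iso_biprod_of_idempotent hp
    rcases hX Y Z ⟨e⟩ with hY | hZ
    · left
      simp [reassoc_of% isZero_left_iff_biprod_fst_inl_eq_zero.mp hY]
    · right
      simp [reassoc_of% isZero_right_iff_biprod_fst_inl_eq_id.mp hZ]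
  · have hconj : e.inv ≫ (e.hom ≫ biprod.fst ≫ biprod.inl ≫ e.inv) ≫ e.hom =
        (biprod.fst ≫ biprod.inl : Y ⊞ Z ⟶ Y ⊞ Z) := by simp
    rcases hX (e.hom ≫ biprod.fst ≫ biprod.inl ≫ e.inv) (by simp) with h | h
    · left
      rw [isZero_left_iff_biprod_fst_inl_eq_zero, ← hconj, h]
      simp
    · right
      rw [isZero_right_iff_biprod_fst_inl_eq_id, ← hconj, h]
      simp

theorem IndecomposableObj.map {B : Type u₁} {A : Type u₂} [Category.{v₁} B] [Category.{v₂} A]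
    [Abelian B] [Abelian A] (F : B ⥤ A) [F.Full] [F.Faithful] [F.PreservesZeroMorphisms]
    {X : B} (hX : IndecomposableObj X) : IndecomposableObj (F.obj X) := by
  rw [indecomposableObj_iff_idempotents] at hX ⊢
  obtain ⟨hX0, hX⟩ := hX
  refine ⟨fun h => hX0 ?_, fun p hp => ?_⟩
  · rw [IsZero.iff_id_eq_zero]
    exact F.map_injective (by simpa using h.eq_of_src (𝟙 _) 0)
  · have hq : F.preimage p ≫ F.preimage p = F.preimage p :=
      F.map_injective (by simpa using hp)
    rcases hX _ hq with h | h
    · left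
      simpa using congrArg F.map h
    · right
      simpa using congrArg F.map h

namespace CategoryTheory.ShortComplex.ShortExact

variable {A : Type u₁} [Category.{v₁} A] [Abelian A]

theorem pullback_snd {U V C W : A} {f : U ⟶ V} {π : V ⟶ C} {w : f ≫ π = 0}
    (hS : (ShortComplex.mk f π w).ShortExact) (g : W ⟶ C) :
    (ShortComplex.mk (pullback.lift f 0 (by simp [w])) (pullback.snd π g)
      (pullback.lift_snd _ _ _)).ShortExact := by
  have := hS.mono_f
  have := hS.epi_g
  have : Mono (pullback.lift f 0 (by simp [w]) : U ⟶ pullback π g) :=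
    mono_of_mono_fac (pullback.lift_fst _ _ _)
  refine .mk' (ShortComplex.exact_of_f_is_kernel _
    (KernelFork.IsLimit.ofι' _ _ fun s hs => ?_)) inferInstance inferInstance
  obtain ⟨l, hl⟩ := KernelFork.IsLimit.lift' hS.fIsKernel (s ≫ pullback.fst π g)
    (by simp [pullback.condition, reassoc_of% hs])
  refine ⟨l, pullback.hom_ext ?_ ?_⟩
  · rw [Category.assoc, pullback.lift_fst]
    exact hl
  · rw [Category.assoc, pullback.lift_snd, comp_zero]
    exact hs.symm

theorem pullback_fst {V C W S : A} (π : V ⟶ C) [Epi π] {g : W ⟶ C} {h : C ⟶ S}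
    {w : g ≫ h = 0} (hS : (ShortComplex.mk g h w).ShortExact) :
    (ShortComplex.mk (pullback.fst π g) (π ≫ h)
      (by simp [pullback.condition_assoc, w])).ShortExact := by
  have := hS.mono_f
  have := hS.epi_g
  refine .mk' (ShortComplex.exact_of_f_is_kernel _
    (KernelFork.IsLimit.ofι' _ _ fun s hs => ?_)) inferInstance (epi_comp _ _)
  obtain ⟨l, hl⟩ := KernelFork.IsLimit.lift' hS.fIsKernel (s ≫ π) (by simpa using hs)
  exact ⟨pullback.lift s l hl.symm, pullback.lift_fst _ _ _⟩

end CategoryTheory.ShortComplex.ShortExact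

section HasFactors

open ZeroObject

variable {A : Type u₁} [Category.{v₁} A] [Abelian A]

/-- `HasFactors X L`: `X` has a composition series whose simple factors, from the bottom up, are
the objects listed in `L`. The factors are recorded as objects rather than up to isomorphism, so
that two such lists can be compared by `List.Perm`. -/
inductive HasFactors : A → List A → Prop
  | zero {X : A} : IsZero X → HasFactors X []
  | snoc {U V S : A} {f : U ⟶ V} {g : V ⟶ S} {w : f ≫ g = 0} {L : List A} :
      (ShortComplex.mk f g w).ShortExact → Simple S → HasFactors U L → HasFactors V (L ++ [S])

theorem HasFactors.of_iso {X Y : A} {L : List A} (h : HasFactors X L) (e : X ≅ Y) :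
    HasFactors Y L := by
  cases h with
  | zero hX => exact .zero (hX.of_iso e.symm)
  | @snoc U X S f g w L hfg hS hU =>
    refine .snoc (f := f ≫ e.hom) (g := e.inv ≫ g) (w := by simp [w]) ?_ hS hU
    refine ShortComplex.shortExact_of_iso ?_ hfg
    exact ShortComplex.isoMk (Iso.refl _) e (Iso.refl _)

theorem HasFactors.single {S : A} (hS : Simple S) : HasFactors S [S] :=
  .snoc (f := (0 : 0 ⟶ S)) (g := 𝟙 S) (w := zero_comp)
    (.mk' ((ShortComplex.exact_iff_mono _ rfl).2 inferInstance) inferInstance inferInstance)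
    hS (.zero (isZero_zero A))

theorem HasFactors.append {C : A} {L₂ : List A} (h₂ : HasFactors C L₂) {U V : A}
    {f : U ⟶ V} {π : V ⟶ C} {w : f ≫ π = 0} (hS : (ShortComplex.mk f π w).ShortExact)
    {L₁ : List A} (h₁ : HasFactors U L₁) : HasFactors V (L₁ ++ L₂) := by
  induction h₂ generalizing U V with
  | zero hC =>
    have := hS.isIso_f_iff.2 hC
    simpa using h₁.of_iso (asIso f)
  | @snoc W C S g h w' L hgh hS' hW ih =>
    have := hS.epi_g
    rw [← List.append_assoc]
    exact .snoc (hgh.pullback_fst π) hS' (ih (hS.pullback_snd g) h₁)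

theorem HasFactors.append_cokernel {U V : A} (f : U ⟶ V) [Mono f] {L₁ L₂ : List A}
    (h₁ : HasFactors U L₁) (h₂ : HasFactors (cokernel f) L₂) : HasFactors V (L₁ ++ L₂) :=
  h₂.append (.mk' (ShortComplex.exact_cokernel f) inferInstance inferInstance) h₁

theorem hasFactors_of_filtration : ∀ {n : ℕ} (obj : Fin (n + 1) → A)
    (map : ∀ i : Fin n, obj i.castSucc ⟶ obj i.succ), (∀ i, Mono (map i)) → IsZero (obj 0) →
    ∀ {L : Fin n → List A}, (∀ i, HasFactors (cokernel (map i)) (L i)) →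
      HasFactors (obj (Fin.last n)) (List.ofFn L).flatten
  | 0, _, _, _, h₀, _, _ => .zero h₀
  | n + 1, obj, map, hmono, h₀, L, hL => by
    have := hmono (Fin.last n)
    rw [List.ofFn_succ', List.concat_eq_append, List.flatten_append, List.flatten_singleton]
    exact .append_cokernel (map (Fin.last n))
      (hasFactors_of_filtration (fun i => obj i.castSucc) (fun i => map i.castSucc)
        (fun i => hmono i.castSucc) h₀ (fun i => hL i.castSucc))
      (hL (Fin.last n))

theorem CompChain.hasFactors {X : A} (c : CompChain X) :
    HasFactors X (List.ofFn fun i => cokernel (c.map i)) := by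
  have h := hasFactors_of_filtration c.obj c.map c.mono c.bot
    (fun i => .single (c.simpleFactor i))
  have hflat : ∀ {n} (f : Fin n → A), (List.ofFn fun i => [f i]).flatten = List.ofFn f := by
    intro n f
    induction n <;> simp_all [List.ofFn_succ]
  rw [hflat] at h
  exact h.of_iso c.top

theorem CompChain.hasFactors_map {B : Type u₂} [Category.{v₂} B] [Abelian B] {X : A}
    (c : CompChain X) (F : A ⥤ B) [F.PreservesMonomorphisms] [F.PreservesZeroMorphisms]
    {L : Fin c.n → List B} (hL : ∀ i, HasFactors (cokernel (F.map (c.map i))) (L i)) :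
    HasFactors (F.obj X) (List.ofFn L).flatten :=
  (hasFactors_of_filtration (fun i => F.obj (c.obj i)) (fun i => F.map (c.map i))
    (fun i => have := c.mono i; inferInstance) (F.map_isZero c.bot) hL).of_iso (F.mapIso c.top)

end HasFactors

namespace CompChain

variable {A : Type u₁} [Category.{v₁} A] [Abelian A]

def ofIsZero {X : A} (hX : IsZero X) : CompChain X where
  n := 0
  obj _ := X
  map i := i.elim0
  mono i := i.elim0
  simpleFactor i := i.elim0
  bot := hX
  top := Iso.refl X

variable {U V : A} (c : CompChain U) (f : U ⟶ V)

abbrev snocObj (V : A) : Fin (c.n + 2) → A := Fin.snoc (α := fun _ => A) c.obj V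

def snocMap : ∀ k : Fin (c.n + 1), c.snocObj V k.castSucc ⟶ c.snocObj V k.succ :=
  Fin.lastCases (eqToHom (by simp) ≫ c.top.hom ≫ f ≫ eqToHom (by simp))
    fun j => eqToHom (by simp) ≫ c.map j ≫
      eqToHom (by simp only [snocObj, Fin.succ_castSucc, Fin.snoc_castSucc])

theorem nonempty_cokernel_snocMap_castSucc_iso (j : Fin c.n) :
    Nonempty (cokernel (c.snocMap f j.castSucc) ≅ cokernel (c.map j)) := by
  rw [snocMap, Fin.lastCases_castSucc]
  exact ⟨cokernelEpiComp _ _ ≪≫ cokernelCompIsIso _ _⟩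

theorem nonempty_cokernel_snocMap_last_iso :
    Nonempty (cokernel (c.snocMap f (Fin.last c.n)) ≅ cokernel f) := by
  rw [snocMap, Fin.lastCases_last]
  exact ⟨cokernelEpiComp _ _ ≪≫ cokernelEpiComp _ _ ≪≫ cokernelCompIsIso _ _⟩

def snoc [Mono f] (hf : Simple (cokernel f)) : CompChain V where
  n := c.n + 1
  obj := c.snocObj V
  map := c.snocMap f
  mono k := by
    induction k using Fin.lastCases with
    | last => rw [snocMap, Fin.lastCases_last]; infer_instance
    | cast j => have := c.mono j; rw [snocMap, Fin.lastCases_castSucc]; infer_instance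
  simpleFactor k := by
    induction k using Fin.lastCases with
    | last => exact Simple.of_iso (c.nonempty_cokernel_snocMap_last_iso f).some
    | cast j =>
      have := c.simpleFactor j
      exact Simple.of_iso (c.nonempty_cokernel_snocMap_castSucc_iso f j).some
  bot := c.bot.of_iso (eqToIso (by simp))
  top := eqToIso (Fin.snoc_last (α := fun _ => A) V c.obj)

end CompChain

section CompositionFactors

variable {A : Type u₁} [Category.{v₁} A] [Abelian A]

theorem HasFactors.exists_compChain {X : A} {L : List A} (h : HasFactors X L) :
    ∃ (c : CompChain X) (hn : c.n = L.length),
      ∀ i, Nonempty (cokernel (c.map i) ≅ L[i.cast hn]) := by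
  induction h with
  | zero hX => exact ⟨.ofIsZero hX, rfl, fun i => i.elim0⟩
  | @snoc U V S f g w L hfg hS hU ih =>
    obtain ⟨c, hn, hc⟩ := ih
    have := hfg.mono_f
    let e : cokernel f ≅ S := (cokernelIsCokernel f).coconePointUniqueUpToIso hfg.gIsCokernel
    refine ⟨c.snoc f (Simple.of_iso e), show c.n + 1 = _ by simp [hn], fun k => ?_⟩
    induction k using Fin.lastCases with
    | last =>
      obtain ⟨e'⟩ := c.nonempty_cokernel_snocMap_last_iso f
      exact ⟨e' ≪≫ e ≪≫ eqToIso (by grind)⟩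
    | cast j =>
      obtain ⟨e'⟩ := c.nonempty_cokernel_snocMap_castSucc_iso f j
      obtain ⟨e''⟩ := hc j
      exact ⟨e' ≪≫ e'' ≪≫ eqToIso (List.getElem_append_left _).symm⟩

theorem HasFactors.sameFactors {X Y : A} {L₁ L₂ : List A} (hX : HasFactors X L₁)
    (hY : HasFactors Y L₂) (h : L₁.Perm L₂) : SameFactors X Y := by
  obtain ⟨c₁, hn₁, hc₁⟩ := hX.exists_compChain
  obtain ⟨c₂, hn₂, hc₂⟩ := hY.exists_compChain
  obtain ⟨σ, hσ⟩ := h.exists_equiv_getElem_eq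
  refine ⟨c₁, c₂, (finCongr hn₁).trans (σ.trans (finCongr hn₂).symm), fun i => ?_⟩
  obtain ⟨e₁⟩ := hc₁ i
  obtain ⟨e₂⟩ := hc₂ ((σ (i.cast hn₁)).cast hn₂.symm)
  exact ⟨e₁ ≪≫ eqToIso (by simp [← hσ]) ≪≫ e₂.symm⟩

end CompositionFactors

theorem SameFactors.map {B : Type u₁} {A : Type u₂} [Category.{v₁} B] [Category.{v₂} A]
    [Abelian B] [Abelian A] (F : B ⥤ A) [PreservesFiniteLimits F] [PreservesFiniteColimits F]
    (hA : AllFiniteLength A) {X Y : B} (h : SameFactors X Y) :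
    SameFactors (F.obj X) (F.obj Y) := by
  obtain ⟨cX, cY, e, hfac⟩ := h
  obtain ⟨L, hL⟩ : ∃ L : Fin cY.n → List A, ∀ j, HasFactors (cokernel (F.map (cY.map j))) (L j) :=
    ⟨_, fun j => (hA _).some.hasFactors⟩
  refine (cX.hasFactors_map F (L := L ∘ e) fun i => ?_).sameFactors (cY.hasFactors_map F hL)
    (List.ofFn_comp_equiv_perm L e).flatten
  obtain ⟨b⟩ := hfac i
  exact (hL (e i)).of_iso
    ((PreservesCokernel.iso F _).symm ≪≫ F.mapIso b.symm ≪≫ PreservesCokernel.iso F _)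

theorem stmt_6_general {B : Type u₁} {A : Type u₂} [Category.{v₁} B] [Category.{v₂} A]
    [Abelian B] [Abelian A] (F : B ⥤ A) [F.Full] [F.Faithful]
    [PreservesFiniteLimits F] [PreservesFiniteColimits F]
    (hA : AllFiniteLength A)
    (X Y : B) (hX : IndecomposableObj X) (hY : IndecomposableObj Y)
    (hXY : SameFactors X Y) (hniso : IsEmpty (X ≅ Y)) :
    ∃ X' Y' : A, IndecomposableObj X' ∧ IndecomposableObj Y' ∧
      SameFactors X' Y' ∧ IsEmpty (X' ≅ Y') :=
  ⟨F.obj X, F.obj Y, hX.map F, hY.map F, hXY.map F hA,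
    ⟨fun e => hniso.false (F.preimageIso e)⟩⟩

/-- a full exact embedding transports a pair of non-isomorphic indecomposable
objects with the same composition factors. -/
theorem stmt_6 {B : Type u₁} {A : Type u₂} [Category.{v₁} B] [Category.{v₂} A]
    [Abelian B] [Abelian A] (F : B ⥤ A) [F.Full] [F.Faithful]
    [PreservesFiniteLimits F] [PreservesFiniteColimits F]
    (hB : AllFiniteLength B) (hA : AllFiniteLength A)
    (X Y : B) (hX : IndecomposableObj X) (hY : IndecomposableObj Y)
    (hXY : SameFactors X Y) (hniso : IsEmpty (X ≅ Y)) :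
    ∃ X' Y' : A, IndecomposableObj X' ∧ IndecomposableObj Y' ∧
      SameFactors X' Y' ∧ IsEmpty (X' ≅ Y') :=
  stmt_6_general F hA X Y hX hY hXY hniso
end

section
/- Let R be a hereditary artinian ring and e a primitive idempotent. Then eJe = 0, where J is the Jacobson radical of R. -/
/-- A module is indecomposable. -/
def IsIndecomposable (R M : Type) [Ring R] [AddCommGroup M] [Module R M] : Prop :=
  Nontrivial M ∧ ∀ A B : Submodule R M, IsCompl A B → A = ⊥ ∨ B = ⊥

/-- A ring is (left) hereditary: submodules of projective modules are projective. -/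
def IsHereditaryRing (R : Type) [Ring R] : Prop :=
  ∀ (P : Type) (_ : AddCommGroup P) (_ : Module R P), Module.Projective R P →
    ∀ N : Submodule R P, Module.Projective R N

/-- for a hereditary artinian ring `R` with Jacobson radical `J` and a
primitive idempotent `e`, one has `eJe = 0`. -/
theorem stmt_14 (R : Type) [Ring R] [IsArtinianRing R] (hR : IsHereditaryRing R)
    (e : R) (hidem : IsIdempotentElem e)
    (hprim : IsIndecomposable R ↥(Submodule.span R {e})) :
    ∀ r ∈ (⊥ : Ideal R).jacobson, e * r * e = 0 := by
  intro r hr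
  by_contra hx
  set x : R := e * r * e with hxdef
  -- basic facts
  have hex : e * x = x := by rw [hxdef, ← mul_assoc, ← mul_assoc, hidem]
  have heM : e ∈ Submodule.span R {e} := Submodule.mem_span_singleton_self e
  set M := Submodule.span R {e} with hM
  -- multiplication on the right by `x` maps `M` into `M`
  have hmem : ∀ m : R, m ∈ M → m * x ∈ M := by
    intro m _
    refine Submodule.mem_span_singleton.mpr ⟨m * (e * r), ?_⟩
    simp [hxdef, smul_eq_mul, mul_assoc]
  -- and into `span {x}`
  have hmemN : ∀ m : R, m ∈ M → m * x ∈ Submodule.span R {x} := by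
    intro m hm
    obtain ⟨a, ha⟩ := Submodule.mem_span_singleton.mp hm
    refine Submodule.mem_span_singleton.mpr ⟨a, ?_⟩
    rw [← ha]; simp [smul_eq_mul, mul_assoc, hex]
  set N := Submodule.span R {x} with hN
  -- the endomorphism of M given by right multiplication by x
  let h : ↥M →ₗ[R] ↥M :=
    { toFun := fun m => ⟨m.1 * x, hmem m.1 m.2⟩
      map_add' := by intro a b; ext; simp [add_mul]
      map_smul' := by intro a b; ext; simp [smul_eq_mul, mul_assoc] }
  -- the corestriction onto span {x}
  let g : ↥M →ₗ[R] ↥N :=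
    { toFun := fun m => ⟨m.1 * x, hmemN m.1 m.2⟩
      map_add' := by intro a b; ext; simp [add_mul]
      map_smul' := by intro a b; ext; simp [smul_eq_mul, mul_assoc] }
  have hgsurj : Function.Surjective g := by
    rintro ⟨n, hn⟩
    obtain ⟨a, ha⟩ := Submodule.mem_span_singleton.mp hn
    refine ⟨⟨a * e, Submodule.mem_span_singleton.mpr ⟨a, rfl⟩⟩, ?_⟩
    ext
    simp only [g, LinearMap.coe_mk, AddHom.coe_mk]
    rw [← ha]; simp [smul_eq_mul, mul_assoc, hex]
  -- N is projective since R is hereditary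
  haveI hNproj : Module.Projective R ↥N := hR R inferInstance inferInstance inferInstance N
  obtain ⟨s, hs⟩ := Module.projective_lifting_property g (LinearMap.id) hgsurj
  have hgs : ∀ n : ↥N, g (s n) = n := fun n => congrArg (· n) hs
  -- the projection onto range s
  set p : Submodule R ↥M := LinearMap.range s with hp
  let f : ↥M →ₗ[R] ↥p :=
    LinearMap.codRestrict p (s.comp g) (fun m => ⟨g m, rfl⟩)
  have hf : ∀ y : ↥p, f y = y := by
    rintro ⟨y, n, hn⟩
    apply Subtype.ext
    show s (g y) = y
    rw [← hn, hgs]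
  have hcompl : IsCompl p (LinearMap.ker f) := LinearMap.isCompl_of_proj hf
  rcases hprim.2 p (LinearMap.ker f) hcompl with hbot | hbot
  · -- p = ⊥ : then s = 0 and N = 0, so x = 0, contradiction
    have hs0 : ∀ n : ↥N, s n = 0 := by
      intro n
      have : s n ∈ p := ⟨n, rfl⟩
      rw [hbot] at this
      simpa using this
    have : (⟨x, Submodule.mem_span_singleton_self x⟩ : ↥N) = 0 := by
      rw [← hgs ⟨x, Submodule.mem_span_singleton_self x⟩, hs0, map_zero]
    exact hx (congrArg Subtype.val this)
  · -- ker f = ⊥ : h is injective, hence surjective since M is artinian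
    have hinj : Function.Injective h := by
      rw [← LinearMap.ker_eq_bot, eq_bot_iff]
      intro m hm
      have hmx : m.1 * x = 0 := congrArg Subtype.val hm
      have hg0 : g m = 0 := Subtype.ext hmx
      have : f m = 0 := by
        apply Subtype.ext
        show s (g m) = 0
        rw [hg0, map_zero]
      have : m ∈ LinearMap.ker f := this
      rw [hbot] at this
      exact this
    haveI : IsArtinian R ↥M := isArtinian_span_of_finite R (Set.finite_singleton e)
    have hsurj : Function.Surjective h :=
      IsArtinian.surjective_of_injective_endomorphism h hinj
    obtain ⟨m, hm⟩ := hsurj ⟨e, heM⟩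
    have hme : m.1 * x = e := congrArg Subtype.val hm
    -- so e = (m * (e * r)) * e with m * (e * r) in the Jacobson radical
    have hje : (m.1 * (e * r)) * e = e := by
      rw [mul_assoc]; rw [show e * r * e = x from rfl, hme]
    have hj : m.1 * (e * r) ∈ (⊥ : Ideal R).jacobson :=
      Ideal.mul_mem_left _ _ (Ideal.mul_mem_left _ _ hr)
    -- elements of the Jacobson radical: 1 - j has a left inverse
    obtain ⟨z, hz⟩ := Ideal.mem_jacobson_iff.mp hj (-1)
    rw [Ideal.mem_bot] at hz
    have hz1 : z * (1 - m.1 * (e * r)) = 1 := by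
      have := sub_eq_zero.mp hz
      calc z * (1 - m.1 * (e * r)) = z * (-1) * (m.1 * (e * r)) + z := by noncomm_ring
        _ = 1 := this
    have he0 : e = 0 := by
      have h1 : (1 - m.1 * (e * r)) * e = 0 := by
        rw [sub_mul, one_mul, hje, sub_self]
      calc e = (z * (1 - m.1 * (e * r))) * e := by rw [hz1, one_mul]
        _ = z * ((1 - m.1 * (e * r)) * e) := by rw [mul_assoc]
        _ = 0 := by rw [h1, mul_zero]
    -- contradiction with Nontrivial M
    obtain ⟨⟨a, ha⟩, ⟨b, hb⟩, hab⟩ := hprim.1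
    rw [hM, he0] at ha hb
    simp only [Submodule.span_zero_singleton, Submodule.mem_bot] at ha hb
    exact hab (by simp [Subtype.ext_iff, ha, hb])
end
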